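/- Let $X^+$ be a one-sided subshift of finite type with normalized potential $\varphi$ bounded, and let $\mathcal{L}_b h(x) = \sum_{\sigma(y)=x} e^{(\varphi + ibr)(y)} h(y)$ be the twisted transfer operator. Fix $n \ge 1$, $x \in X^+$, $\epsilon > 0$, and a bounded function $h : X^+ \to \mathbb{C}$ with $|h(y)| \ge \frac{3}{4}\|h\|_\infty$ for all $y$. Suppose there exist distinct $y_1, y_2 \in \sigma^{-n}(x)$ with $|e^{ibr_n(y_1)} h(y_1)/|h(y_1)| - e^{ibr_n(y_2)} h(y_2)/|h(y_2)|| \ge \epsilon$. Then $|\mathcal{L}_b^n h(x)| \le (1 - \frac{\epsilon^2}{4} e^{-n\|\varphi\|_\infty}) \|h\|_\infty$. -/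

import Mathlib

/-- The twisted transfer operator `𝓛_b h (x) = ∑_{σ(y)=x} e^{φ(y) + i b r(y)} h(y)`. -/
noncomputable def twistedTransfer {X : Type*} (σ : X → X) (φ r : X → ℝ) (b : ℝ)
    (h : X → ℂ) : X → ℂ :=
  fun x => ∑' y : σ ⁻¹' {x},
    Complex.exp ((φ (y : X) : ℂ) + Complex.I * b * r (y : X)) * h (y : X)
private lemma finIter {X : Type*} {σ : X → X} (hfin : ∀ x : X, (σ ⁻¹' {x}).Finite) :
    ∀ (n : ℕ) (x : X), ((σ^[n]) ⁻¹' {x}).Finite := by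
  intro n
  induction n with
  | zero => intro x; simpa using Set.finite_singleton x
  | succ n ih =>
    intro x
    have hset : (σ^[n+1]) ⁻¹' {x} = ⋃ z ∈ σ ⁻¹' {x}, (σ^[n]) ⁻¹' {z} := by
      ext y
      simp only [Set.mem_preimage, Set.mem_singleton_iff, Set.mem_iUnion,
        Function.iterate_succ_apply']
      constructor
      · intro hy; exact ⟨σ^[n] y, hy, rfl⟩
      · rintro ⟨z, hz, rfl⟩; exact hz
    rw [hset]
    exact (hfin x).biUnion (fun z _ => ih z)

private lemma tsum_fin {X : Type*} {M : Type*} [AddCommMonoid M] [TopologicalSpace M] [T2Space M]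
    {s : Set X} (hs : s.Finite) (g : X → M) :
    (∑' y : s, g (y : X)) = ∑ y ∈ hs.toFinset, g y := by
  haveI := hs.fintype
  rw [tsum_fintype]
  exact (Finset.sum_subtype _ (fun x => hs.mem_toFinset) g).symm

private lemma sum_decomp {X : Type*} {σ : X → X} (hfin : ∀ x : X, (σ ⁻¹' {x}).Finite)
    {M : Type*} [AddCommMonoid M] (g : X → M) (n : ℕ) (x : X) :
    ∑ y ∈ (finIter hfin (n+1) x).toFinset, g y
      = ∑ z ∈ (hfin x).toFinset, ∑ y ∈ (finIter hfin n z).toFinset, g y := by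
  classical
  rw [← Finset.sum_biUnion]
  · apply Finset.sum_congr _ (fun _ _ => rfl)
    ext y
    simp only [Finset.mem_biUnion, Set.Finite.mem_toFinset, Set.mem_preimage,
      Set.mem_singleton_iff, Function.iterate_succ_apply']
    constructor
    · intro hy; exact ⟨σ^[n] y, hy, rfl⟩
    · rintro ⟨z, hz, hy⟩; rw [hy]; exact hz
  · intro a ha b hb hab
    simp only [Finset.disjoint_left, Set.Finite.mem_toFinset, Set.mem_preimage,
      Set.mem_singleton_iff]
    intro y hy hy'
    exact hab (by rw [← hy, ← hy'])

private lemma norm_iter {X : Type*} {σ : X → X} (hfin : ∀ x : X, (σ ⁻¹' {x}).Finite)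
    {φ : X → ℝ} (hnorm : ∀ x : X, (∑' y : σ ⁻¹' {x}, Real.exp (φ (y : X))) = 1) :
    ∀ (n : ℕ) (x : X),
      ∑ y ∈ (finIter hfin n x).toFinset, Real.exp (∑ j ∈ Finset.range n, φ (σ^[j] y)) = 1 := by
  intro n
  induction n with
  | zero =>
    intro x
    have hs : (finIter hfin 0 x).toFinset = {x} := by
      ext y; simp
    rw [hs]
    simp
  | succ n ih =>
    intro x
    rw [sum_decomp hfin _ n x]
    have hx : ∑ z ∈ (hfin x).toFinset, Real.exp (φ z) = 1 := by
      rw [← tsum_fin (hfin x) (fun z => Real.exp (φ z))]; exact hnorm x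
    calc ∑ z ∈ (hfin x).toFinset, ∑ y ∈ (finIter hfin n z).toFinset,
            Real.exp (∑ j ∈ Finset.range (n+1), φ (σ^[j] y))
        = ∑ z ∈ (hfin x).toFinset, Real.exp (φ z) := by
          apply Finset.sum_congr rfl
          intro z hz
          have : ∀ y ∈ (finIter hfin n z).toFinset,
              Real.exp (∑ j ∈ Finset.range (n+1), φ (σ^[j] y))
                = Real.exp (∑ j ∈ Finset.range n, φ (σ^[j] y)) * Real.exp (φ z) := by
            intro y hy
            have hyz : σ^[n] y = z := by
              simpa [Set.Finite.mem_toFinset] using hy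
            rw [Finset.sum_range_succ, hyz, Real.exp_add]
          rw [Finset.sum_congr rfl this, ← Finset.sum_mul, ih z, one_mul]
      _ = 1 := hx

private lemma key_formula {X : Type*} {σ : X → X} (hfin : ∀ x : X, (σ ⁻¹' {x}).Finite)
    (φ r : X → ℝ) (b : ℝ) (h : X → ℂ) :
    ∀ (n : ℕ) (x : X), (twistedTransfer σ φ r b)^[n] h x
      = ∑ y ∈ (finIter hfin n x).toFinset,
          Complex.exp (((∑ j ∈ Finset.range n, φ (σ^[j] y) : ℝ) : ℂ)
            + Complex.I * b * ((∑ j ∈ Finset.range n, r (σ^[j] y) : ℝ) : ℂ)) * h y := by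
  intro n
  induction n with
  | zero =>
    intro x
    have hs : (finIter hfin 0 x).toFinset = {x} := by ext y; simp
    rw [Function.iterate_zero_apply, hs]
    simp
  | succ n ih =>
    intro x
    rw [Function.iterate_succ_apply' (twistedTransfer σ φ r b) n h]
    show (∑' y : σ ⁻¹' {x}, Complex.exp ((φ (y : X) : ℂ) + Complex.I * b * r (y : X))
        * ((twistedTransfer σ φ r b)^[n] h) (y : X)) = _
    rw [tsum_fin (hfin x) (fun z => Complex.exp ((φ z : ℂ) + Complex.I * b * r z)
        * ((twistedTransfer σ φ r b)^[n] h) z)]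
    rw [sum_decomp hfin _ n x]
    apply Finset.sum_congr rfl
    intro z hz
    rw [ih z, Finset.mul_sum]
    apply Finset.sum_congr rfl
    intro y hy
    have hyz : σ^[n] y = z := by simpa [Set.Finite.mem_toFinset] using hy
    rw [Finset.sum_range_succ, Finset.sum_range_succ, hyz, ← mul_assoc, ← Complex.exp_add]
    congr 2
    push_cast
    ring

private lemma elem_ineq (w₁ w₂ : ℂ) (h₁ : ‖w₁‖ = 1) (h₂ : ‖w₂‖ = 1) {ε t₁ t₂ : ℝ}
    (hε : 0 ≤ ε) (hsep : ε ≤ ‖w₁ - w₂‖) (ht₁ : 0 < t₁) (ht₂ : 0 < t₂) :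
    ‖(t₁ : ℂ) * w₁ + (t₂ : ℂ) * w₂‖ ≤ t₁ + t₂ - ε ^ 2 / 2 * (t₁ * t₂ / (t₁ + t₂)) := by
  have hsq : ∀ z : ℂ, ‖z‖ ^ 2 = z.re ^ 2 + z.im ^ 2 := fun z => by
    rw [Complex.sq_norm, Complex.normSq_apply]; ring
  have hε2 : ε ≤ 2 := by
    calc ε ≤ ‖w₁ - w₂‖ := hsep
    _ ≤ ‖w₁‖ + ‖w₂‖ := norm_sub_le _ _
    _ = 2 := by rw [h₁, h₂]; norm_num
  have hn1 : w₁.re ^ 2 + w₁.im ^ 2 = 1 := by rw [← hsq, h₁]; norm_num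
  have hn2 : w₂.re ^ 2 + w₂.im ^ 2 = 1 := by rw [← hsq, h₂]; norm_num
  have hd : ε ^ 2 ≤ (w₁.re - w₂.re) ^ 2 + (w₁.im - w₂.im) ^ 2 := by
    calc ε ^ 2 ≤ ‖w₁ - w₂‖ ^ 2 := by
          apply pow_le_pow_left₀ hε hsep
    _ = _ := by rw [hsq]; simp [Complex.sub_re, Complex.sub_im]
  have key : ‖(t₁ : ℂ) * w₁ + (t₂ : ℂ) * w₂‖ ^ 2 ≤ (t₁ + t₂) ^ 2 - ε ^ 2 * (t₁ * t₂) := by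
    rw [hsq]
    simp only [Complex.add_re, Complex.add_im, Complex.mul_re, Complex.mul_im,
      Complex.ofReal_re, Complex.ofReal_im]
    have hA := mul_le_mul_of_nonneg_left hd (le_of_lt (mul_pos ht₁ ht₂))
    have h1a : t₁ ^ 2 * (w₁.re ^ 2 + w₁.im ^ 2) = t₁ ^ 2 := by rw [hn1]; ring
    have h2a : t₂ ^ 2 * (w₂.re ^ 2 + w₂.im ^ 2) = t₂ ^ 2 := by rw [hn2]; ring
    have h1b : t₁ * t₂ * (w₁.re ^ 2 + w₁.im ^ 2) = t₁ * t₂ := by rw [hn1]; ring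
    have h2b : t₁ * t₂ * (w₂.re ^ 2 + w₂.im ^ 2) = t₁ * t₂ := by rw [hn2]; ring
    nlinarith [hA, h1a, h2a, h1b, h2b]
  have hT : 0 < t₁ + t₂ := by linarith
  have hQ : 0 ≤ t₁ * t₂ / (t₁ + t₂) := by positivity
  have hP : t₁ * t₂ / (t₁ + t₂) ≤ (t₁ + t₂) / 2 := by
    rw [div_le_div_iff₀ hT two_pos]
    nlinarith [sq_nonneg (t₁ - t₂)]
  have hR : 0 ≤ t₁ + t₂ - ε ^ 2 / 2 * (t₁ * t₂ / (t₁ + t₂)) := by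
    have h1 : ε ^ 2 / 2 * (t₁ * t₂ / (t₁ + t₂)) ≤ 2 * ((t₁ + t₂) / 2) := by
      apply mul_le_mul (by nlinarith) hP hQ (by norm_num)
    linarith
  have hRsq : (t₁ + t₂) ^ 2 - ε ^ 2 * (t₁ * t₂)
      ≤ (t₁ + t₂ - ε ^ 2 / 2 * (t₁ * t₂ / (t₁ + t₂))) ^ 2 := by
    have hTne : (t₁ + t₂) ≠ 0 := hT.ne'
    have : (t₁ + t₂ - ε ^ 2 / 2 * (t₁ * t₂ / (t₁ + t₂))) ^ 2
        = (t₁ + t₂) ^ 2 - ε ^ 2 * (t₁ * t₂) + (ε ^ 2 / 2 * (t₁ * t₂ / (t₁ + t₂))) ^ 2 := by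
      field_simp
      ring
    rw [this]
    nlinarith [sq_nonneg (ε ^ 2 / 2 * (t₁ * t₂ / (t₁ + t₂)))]
  nlinarith [key, hRsq, hR, norm_nonneg ((t₁ : ℂ) * w₁ + (t₂ : ℂ) * w₂)]

private lemma final_ineq {e M F₁ F₂ s₁ s₂ ε : ℝ} (he : 0 < e) (hM : 0 < M)
    (hF₁ : e ≤ F₁) (hF₂ : e ≤ F₂) (hs₁ : 3 / 4 * M ≤ s₁) (hs₂ : 3 / 4 * M ≤ s₂)
    (hs₁' : s₁ ≤ M) (hs₂' : s₂ ≤ M) (hε : 0 < ε) (hε2 : ε ≤ 2) :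
    (F₁ * s₁ + F₂ * s₂ - ε ^ 2 / 2 * (F₁ * s₁ * (F₂ * s₂) / (F₁ * s₁ + F₂ * s₂)))
      + (1 - F₁ - F₂) * M ≤ (1 - ε ^ 2 / 4 * e) * M := by
  have hs₁0 : 0 < s₁ := by nlinarith
  have hs₂0 : 0 < s₂ := by nlinarith
  have hF₁0 : 0 < F₁ := lt_of_lt_of_le he hF₁
  have hF₂0 : 0 < F₂ := lt_of_lt_of_le he hF₂
  have hT : 0 < F₁ * s₁ + F₂ * s₂ := by positivity
  have hu : 0 < s₁ + s₂ := by linarith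
  have hA : e * (s₁ * s₂) / (s₁ + s₂) ≤ F₁ * s₁ * (F₂ * s₂) / (F₁ * s₁ + F₂ * s₂) := by
    rw [div_le_div_iff₀ hu hT]
    nlinarith [mul_nonneg (mul_nonneg hF₁0.le hs₁0.le) (mul_nonneg (sub_nonneg.2 hF₂) hs₂0.le),
      mul_nonneg (mul_nonneg hF₂0.le hs₂0.le) (mul_nonneg (sub_nonneg.2 hF₁) hs₁0.le),
      mul_nonneg hs₁0.le hs₂0.le]
  have hA' := mul_le_mul_of_nonneg_left hA (by positivity : (0:ℝ) ≤ ε ^ 2 / 2)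
  have hε4 : ε ^ 2 ≤ 4 := by nlinarith
  have hεM : ε ^ 2 * M ≤ 4 * M := mul_le_mul_of_nonneg_right hε4 hM.le
  have hB : ε ^ 2 / 4 * e * M ≤ ε ^ 2 / 2 * (e * (s₁ * s₂) / (s₁ + s₂))
      + e * (M - s₁) + e * (M - s₂) := by
    have h1 : ε ^ 2 / 2 * (e * (s₁ * s₂) / (s₁ + s₂))
        = (ε ^ 2 / 2 * (e * (s₁ * s₂))) / (s₁ + s₂) := by
      field_simp
    rw [h1]
    rw [← sub_le_iff_le_add, ← sub_le_iff_le_add, le_div_iff₀ hu]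
    nlinarith [mul_nonneg (mul_nonneg (sq_nonneg ε) he.le)
        (mul_nonneg (sub_nonneg.2 hs₁') (sub_nonneg.2 hs₂')),
      mul_nonneg (mul_nonneg he.le (by linarith : (0:ℝ) ≤ 2 * M - s₁ - s₂))
        (by linarith : (0:ℝ) ≤ 2 * (s₁ + s₂) - ε ^ 2 * M / 2)]
  have hf1 : e * (M - s₁) ≤ F₁ * (M - s₁) :=
    mul_le_mul_of_nonneg_right hF₁ (by linarith)
  have hf2 : e * (M - s₂) ≤ F₂ * (M - s₂) :=
    mul_le_mul_of_nonneg_right hF₂ (by linarith)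
  nlinarith [hA', hB, hf1, hf2]

theorem stmt15 {X : Type*} (σ : X → X) (φ r : X → ℝ) (b : ℝ)
    (hfin : ∀ x : X, (σ ⁻¹' {x}).Finite)
    (hnorm : ∀ x : X, (∑' y : σ ⁻¹' {x}, Real.exp (φ (y : X))) = 1)
    (Cφ : ℝ) (hCφ : ∀ y, |φ y| ≤ Cφ)
    (h : X → ℂ) (M : ℝ) (hM : ∀ y, ‖h y‖ ≤ M) (hlow : ∀ y, 3 / 4 * M ≤ ‖h y‖)
    (hMpos : 0 < M)
    (n : ℕ) (hn : 1 ≤ n) (x : X) (ε : ℝ) (hε : 0 < ε)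
    (y₁ y₂ : X) (hy₁ : σ^[n] y₁ = x) (hy₂ : σ^[n] y₂ = x) (hne : y₁ ≠ y₂)
    (hsep : ε ≤
      ‖Complex.exp (Complex.I * b * ∑ j ∈ Finset.range n, r (σ^[j] y₁)) *
          (h y₁ / (‖h y₁‖ : ℂ)) -
        Complex.exp (Complex.I * b * ∑ j ∈ Finset.range n, r (σ^[j] y₂)) *
          (h y₂ / (‖h y₂‖ : ℂ))‖) :
    ‖(twistedTransfer σ φ r b)^[n] h x‖ ≤
      (1 - ε ^ 2 / 4 * Real.exp (-(n : ℝ) * Cφ)) * M := by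
  classical
  set Φ : X → ℝ := fun y => ∑ j ∈ Finset.range n, φ (σ^[j] y) with hΦdef
  set R : X → ℝ := fun y => ∑ j ∈ Finset.range n, r (σ^[j] y) with hRdef
  set f : X → ℂ :=
    fun y => Complex.exp ((Φ y : ℂ) + Complex.I * b * (R y : ℂ)) * h y with hfdef
  set w : X → ℂ :=
    fun y => Complex.exp (Complex.I * b * (R y : ℂ)) * (h y / (‖h y‖ : ℂ)) with hwdef
  set S : Finset X := (finIter hfin n x).toFinset with hSdef
  have hh0 : ∀ y, ‖h y‖ ≠ 0 := fun y =>
    ne_of_gt (lt_of_lt_of_le (by linarith) (hlow y))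
  -- basic membership
  have hy₁S : y₁ ∈ S := by
    rw [hSdef, Set.Finite.mem_toFinset]; exact hy₁
  have hy₂S : y₂ ∈ S.erase y₁ := by
    refine Finset.mem_erase.2 ⟨fun hc => hne hc.symm, ?_⟩
    rw [hSdef, Set.Finite.mem_toFinset]; exact hy₂
  set T : Finset X := (S.erase y₁).erase y₂ with hTdef
  -- norms of pieces
  have hwnorm : ∀ y, ‖w y‖ = 1 := by
    intro y
    rw [hwdef]
    simp only
    rw [norm_mul, norm_div, Complex.norm_real, norm_norm,
      div_self (hh0 y), mul_one]
    have : Complex.I * b * (R y : ℂ) = ((b * R y : ℝ) : ℂ) * Complex.I := by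
      push_cast; ring
    rw [this, Complex.norm_exp_ofReal_mul_I]
  have hfw : ∀ y, f y = ((Real.exp (Φ y) * ‖h y‖ : ℝ) : ℂ) * w y := by
    intro y
    rw [hfdef, hwdef]
    simp only
    rw [Complex.exp_add, ← Complex.ofReal_exp, Complex.ofReal_mul]
    have hc : (‖h y‖ : ℂ) * (h y / (‖h y‖ : ℂ)) = h y :=
      mul_div_cancel₀ _ (Complex.ofReal_ne_zero.2 (hh0 y))
    linear_combination (-(((Real.exp (Φ y) : ℝ) : ℂ)
      * Complex.exp (Complex.I * (b : ℂ) * ((R y : ℝ) : ℂ)))) * hc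
  have hfnorm : ∀ y, ‖f y‖ = Real.exp (Φ y) * ‖h y‖ := by
    intro y
    rw [hfw y, norm_mul, Complex.norm_real, hwnorm y, mul_one]
    exact Real.norm_of_nonneg (by positivity)
  -- separation in terms of w
  have hsep' : ε ≤ ‖w y₁ - w y₂‖ := by
    simp only [hwdef, hRdef]
    exact hsep
  have hε2 : ε ≤ 2 := by
    calc ε ≤ ‖w y₁ - w y₂‖ := hsep'
    _ ≤ ‖w y₁‖ + ‖w y₂‖ := norm_sub_le _ _
    _ = 2 := by rw [hwnorm, hwnorm]; norm_num
  -- lower bound on weights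
  have hΦlow : ∀ y, Real.exp (-(n : ℝ) * Cφ) ≤ Real.exp (Φ y) := by
    intro y
    apply Real.exp_le_exp.2
    calc -(n : ℝ) * Cφ = ∑ _j ∈ Finset.range n, (-Cφ) := by
          rw [Finset.sum_const, Finset.card_range, nsmul_eq_mul]; ring
    _ ≤ Φ y := Finset.sum_le_sum fun j _ => (abs_le.1 (hCφ _)).1
  -- rewrite the iterate as a finite sum and split
  have hkey : (twistedTransfer σ φ r b)^[n] h x = f y₁ + (f y₂ + ∑ y ∈ T, f y) := by
    rw [key_formula hfin φ r b h n x, ← hSdef]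
    rw [← Finset.add_sum_erase S f hy₁S, ← Finset.add_sum_erase _ f hy₂S, hTdef]
  have hnorm1 : Real.exp (Φ y₁) + (Real.exp (Φ y₂) + ∑ y ∈ T, Real.exp (Φ y)) = 1 := by
    have := norm_iter hfin hnorm n x
    rw [← hSdef] at this
    rw [← this, ← Finset.add_sum_erase S (fun y => Real.exp (Φ y)) hy₁S,
      ← Finset.add_sum_erase _ (fun y => Real.exp (Φ y)) hy₂S, hTdef]
  -- bound the tail
  have htail : ‖∑ y ∈ T, f y‖ ≤ (∑ y ∈ T, Real.exp (Φ y)) * M := by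
    rw [Finset.sum_mul]
    calc ‖∑ y ∈ T, f y‖ ≤ ∑ y ∈ T, ‖f y‖ := norm_sum_le _ _
    _ ≤ ∑ y ∈ T, Real.exp (Φ y) * M := by
        apply Finset.sum_le_sum
        intro y _
        rw [hfnorm y]
        exact mul_le_mul_of_nonneg_left (hM y) (Real.exp_nonneg _)
  -- bound the two main terms
  set t₁ : ℝ := Real.exp (Φ y₁) * ‖h y₁‖ with ht₁def
  set t₂ : ℝ := Real.exp (Φ y₂) * ‖h y₂‖ with ht₂def
  have hpos : ∀ y : X, 0 < ‖h y‖ := fun y => lt_of_le_of_ne (norm_nonneg _) (Ne.symm (hh0 y))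
  have ht₁pos : 0 < t₁ := mul_pos (Real.exp_pos _) (hpos y₁)
  have ht₂pos : 0 < t₂ := mul_pos (Real.exp_pos _) (hpos y₂)
  have hmain : ‖f y₁ + f y₂‖ ≤ t₁ + t₂ - ε ^ 2 / 2 * (t₁ * t₂ / (t₁ + t₂)) := by
    rw [hfw y₁, hfw y₂]
    exact elem_ineq (w y₁) (w y₂) (hwnorm y₁) (hwnorm y₂) hε.le hsep' ht₁pos ht₂pos
  -- put everything together
  have hsum : ‖(twistedTransfer σ φ r b)^[n] h x‖
      ≤ (t₁ + t₂ - ε ^ 2 / 2 * (t₁ * t₂ / (t₁ + t₂)))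
        + (1 - Real.exp (Φ y₁) - Real.exp (Φ y₂)) * M := by
    rw [hkey, ← add_assoc]
    calc ‖f y₁ + f y₂ + ∑ y ∈ T, f y‖
        ≤ ‖f y₁ + f y₂‖ + ‖∑ y ∈ T, f y‖ := norm_add_le _ _
    _ ≤ (t₁ + t₂ - ε ^ 2 / 2 * (t₁ * t₂ / (t₁ + t₂)))
          + (∑ y ∈ T, Real.exp (Φ y)) * M := add_le_add hmain htail
    _ = _ := by
        congr 2
        linarith [hnorm1]
  refine hsum.trans ?_
  rw [ht₁def, ht₂def]
  exact final_ineq (Real.exp_pos _) hMpos (hΦlow y₁) (hΦlow y₂) (hlow y₁) (hlow y₂)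
    (hM y₁) (hM y₂) hε hε2
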